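/- Let k be an algebraically closed field of characteristic 2. Every simple Lie algebra L over k of dimension 3 admits a basis {e, h, f} with ⁅h,e⁆ = e, ⁅h,f⁆ = f and ⁅e,f⁆ = h; consequently any two 3-dimensional simple Lie algebras over k are isomorphic. -/

import Mathlib

/-!
A simple Lie algebra is not nilpotent, so by Engel's theorem some `ad h₀` is not nilpotent and,
`k` being algebraically closed, has a nonzero eigenvalue; rescaling gives `⁅h, e⁆ = e` with
`e ≠ 0`. Complete `h, e` to a basis `h, e, w`. In characteristic 2 the bracket is symmetric, and
the Jacobi identity for `h, e, w` gives `⁅e, w⁆ = p h + q e`. Here `p ≠ 0`, as otherwise `k ∙ e`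
would be an ideal, and Jacobi then forces `⁅h, w⁆ ≡ w` modulo `k h + k e`. Normalising `w`
gives `f` with `⁅e, f⁆ = h` and `⁅h, f⁆ = f + s² e`, and `(e, h + s e, f + s h)` satisfies the
relations of `𝔰`. Such a triple is automatically linearly independent, hence a basis, and two
such bases match up to a Lie algebra isomorphism.
-/

open LieAlgebra

theorem lie_comm_of_charTwo (R : Type*) {L : Type*} [CommRing R] [CharP R 2] [LieRing L]
    [LieAlgebra R L] (x y : L) : ⁅x, y⁆ = ⁅y, x⁆ := by
  rw [← lie_skew, ← neg_one_smul R, CharTwo.neg_eq, one_smul]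

namespace Module.Basis

variable {k V : Type*} [Field k] [AddCommGroup V] [Module k V] (B : Basis (Fin 3) k V)

theorem exists_eq_fin_three (x : V) : ∃ a b c : k, x = a • B 0 + b • B 1 + c • B 2 :=
  ⟨B.repr x 0, B.repr x 1, B.repr x 2, (B.sum_repr x).symm.trans (Fin.sum_univ_three _)⟩

theorem eq_zero_of_fin_three {a b c : k} (h : a • B 0 + b • B 1 + c • B 2 = 0) :
    a = 0 ∧ b = 0 ∧ c = 0 := by
  have := Fintype.linearIndependent_iff.mp B.linearIndependent ![a, b, c]
    (by simpa [Fin.sum_univ_three] using h)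
  exact ⟨this 0, this 1, this 2⟩

end Module.Basis

theorem LinearMap.map_lie_of_basis {ι k L L' : Type*} [CommRing k] [LieRing L] [LieAlgebra k L]
    [LieRing L'] [LieAlgebra k L'] (B : Module.Basis ι k L) (φ : L →ₗ[k] L')
    (hφ : ∀ i j, φ ⁅B i, B j⁆ = ⁅φ (B i), φ (B j)⁆) (x y : L) : φ ⁅x, y⁆ = ⁅φ x, φ y⁆ := by
  have := LinearMap.ext_basis B B (B := (ad k L : L →ₗ[k] Module.End k L).compr₂ φ)
    (B' := ((ad k L' : L' →ₗ[k] Module.End k L') ∘ₗ φ).compl₂ φ) (by simpa using hφ)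
  simpa using LinearMap.congr_fun₂ this x y

theorem Module.End.exists_hasEigenvalue_ne_zero_of_not_isNilpotent {K V : Type*} [Field K]
    [IsAlgClosed K] [AddCommGroup V] [Module K V] [FiniteDimensional K V] {f : Module.End K V}
    (hf : ¬IsNilpotent f) : ∃ μ : K, μ ≠ 0 ∧ f.HasEigenvalue μ := by
  by_contra! hc
  set P := minpoly K f
  have hroots : P.roots = Multiset.replicate (Multiset.card P.roots) 0 :=
    Multiset.eq_replicate.mpr ⟨rfl, fun μ hμ ↦ by_contra fun h0 ↦
      hc μ h0 (Module.End.hasEigenvalue_of_isRoot (Polynomial.isRoot_of_mem_roots hμ))⟩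
  have hP : P = Polynomial.X ^ Multiset.card P.roots := by
    conv_lhs => rw [(IsAlgClosed.splits P).eq_prod_roots_of_monic (minpoly.monic
      (Algebra.IsIntegral.isIntegral f)), hroots]
    simp
  have hzero : Polynomial.aeval f P = 0 := minpoly.aeval K f
  rw [hP] at hzero
  exact hf ⟨_, by simpa using hzero⟩

/-- `(e, h, f)` satisfies the defining relations of the Lie algebra `𝔰`. -/
structure IsSTriple {L : Type*} [LieRing L] (e h f : L) : Prop where
  lie_h_e : ⁅h, e⁆ = e
  lie_h_f : ⁅h, f⁆ = f
  lie_e_f : ⁅e, f⁆ = h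

namespace IsSTriple

variable {k L : Type*} [Field k] [LieRing L] [LieAlgebra k L] {e h f : L}

theorem linearIndependent (t : IsSTriple e h f) (he : e ≠ 0) :
    LinearIndependent k ![e, h, f] := by
  have hh : h ≠ 0 := fun h0 ↦ he (by rw [← t.lie_h_e, h0, zero_lie])
  rw [Fintype.linearIndependent_iff]
  intro g hg
  simp only [Fin.sum_univ_three, Matrix.cons_val_zero, Matrix.cons_val_one,
    Matrix.cons_val_two, Matrix.head_cons, Matrix.tail_cons] at hg
  have hef : g 0 • e + g 2 • f = 0 := by
    simpa [t.lie_h_e, t.lie_h_f] using congr_arg (⁅h, ·⁆) hg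
  have hg1 : g 1 • h = 0 := by linear_combination (norm := module) hg - hef
  have hg2 : g 2 • h = 0 := by simpa [t.lie_e_f] using congr_arg (⁅e, ·⁆) hef
  have hg0 : g 0 • e = 0 := by simpa [(smul_eq_zero.mp hg2).resolve_right hh] using hef
  intro i
  fin_cases i
  exacts [(smul_eq_zero.mp hg0).resolve_right he, (smul_eq_zero.mp hg1).resolve_right hh,
    (smul_eq_zero.mp hg2).resolve_right hh]

theorem exists_basis (t : IsSTriple e h f) (he : e ≠ 0) (hL : Module.finrank k L = 3) :
    ∃ B : Module.Basis (Fin 3) k L, IsSTriple (B 0) (B 1) (B 2) := by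
  have hli := t.linearIndependent (k := k) he
  let B := basisOfLinearIndependentOfCardEqFinrank hli (by simp [hL])
  have hB : ⇑B = ![e, h, f] := coe_basisOfLinearIndependentOfCardEqFinrank hli _
  exact ⟨B, by simpa [hB] using t⟩

section CharTwo

variable (k) [CharP k 2]
include k

theorem lie_e_h (t : IsSTriple e h f) : ⁅e, h⁆ = e := by rw [lie_comm_of_charTwo k, t.lie_h_e]

theorem lie_f_h (t : IsSTriple e h f) : ⁅f, h⁆ = f := by rw [lie_comm_of_charTwo k, t.lie_h_f]

theorem lie_f_e (t : IsSTriple e h f) : ⁅f, e⁆ = h := by rw [lie_comm_of_charTwo k, t.lie_e_f]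

end CharTwo

/-- The shear by `s` cancels the `s² e`-term of `⁅h, f⁆` against `⁅s e, s h⁆ = s² e`. -/
theorem of_lie_eq_add_sq_smul [CharP k 2] {s : k} (hhe : ⁅h, e⁆ = e) (hef : ⁅e, f⁆ = h)
    (hhf : ⁅h, f⁆ = f + s ^ 2 • e) : IsSTriple e (h + s • e) (f + s • h) where
  lie_h_e := by rw [add_lie, smul_lie, lie_self, smul_zero, add_zero, hhe]
  lie_h_f := by
    have heh : ⁅e, h⁆ = e := by rw [lie_comm_of_charTwo k, hhe]
    simp only [add_lie, lie_add, smul_lie, lie_smul, lie_self, hhf, hef, heh]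
    linear_combination (norm := module) (s ^ 2 * CharTwo.two_eq_zero (R := k)) • e
  lie_e_f := by rw [lie_add, lie_smul, hef, lie_comm_of_charTwo k, hhe]

theorem nonempty_lieEquiv {L' : Type*} [CharP k 2] [LieRing L'] [LieAlgebra k L']
    {B : Module.Basis (Fin 3) k L} {B' : Module.Basis (Fin 3) k L'}
    (t : IsSTriple (B 0) (B 1) (B 2)) (t' : IsSTriple (B' 0) (B' 1) (B' 2)) :
    Nonempty (L ≃ₗ⁅k⁆ L') := by
  let φ := B.equiv B' (Equiv.refl _)
  have hφ : ∀ i, φ (B i) = B' i := fun i ↦ B.equiv_apply i B' (Equiv.refl _)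
  refine ⟨{ φ with map_lie' := (φ : L →ₗ[k] L').map_lie_of_basis B (fun i j ↦ ?_) _ _ }⟩
  simp only [LinearEquiv.coe_coe, hφ]
  fin_cases i <;> fin_cases j <;>
    simp [t.lie_h_e, t.lie_h_f, t.lie_e_f, t.lie_e_h k, t.lie_f_h k, t.lie_f_e k, t'.lie_h_e,
      t'.lie_h_f, t'.lie_e_f, t'.lie_e_h k, t'.lie_f_h k, t'.lie_f_e k, hφ]

end IsSTriple

theorem exists_basis_of_lie_eq_self {k L : Type*} [Field k] [LieRing L] [LieAlgebra k L]
    (hL : Module.finrank k L = 3) {h e : L} (he : e ≠ 0) (hhe : ⁅h, e⁆ = e) :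
    ∃ B : Module.Basis (Fin 3) k L, B 0 = h ∧ B 1 = e := by
  have hh : h ≠ 0 := fun h0 ↦ he (by rw [← hhe, h0, zero_lie])
  have hli : LinearIndependent k ![h, e] := by
    refine (LinearIndependent.pair_iff' hh).mpr fun a hae ↦ he ?_
    rw [← hhe, ← hae, lie_smul, lie_self, smul_zero]
  obtain ⟨w, hw⟩ := exists_linearIndependent_snoc_of_lt_finrank hli (by omega)
  let B := basisOfLinearIndependentOfCardEqFinrank hw (by simp [hL])
  have hB : ⇑B = Fin.snoc ![h, e] w := coe_basisOfLinearIndependentOfCardEqFinrank hw _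
  exact ⟨B, by simp [hB], by simp [hB]⟩

namespace LieAlgebra.IsSimple

theorem not_isNilpotent (R L : Type*) [CommRing R] [LieRing L] [LieAlgebra R L] [IsSimple R L] :
    ¬LieRing.IsNilpotent L := fun _ ↦
  (IsSimple.isAtom_top R L).1 (by rw [← radical_eq_top_of_isSolvable, HasTrivialRadical.radical_eq_bot])

variable {k L : Type*} [Field k] [LieRing L] [LieAlgebra k L] [IsSimple k L]

theorem exists_lie_eq_self [IsAlgClosed k] [FiniteDimensional k L] :
    ∃ h e : L, e ≠ 0 ∧ ⁅h, e⁆ = e := by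
  obtain ⟨x, hx⟩ : ∃ x : L, ¬IsNilpotent (ad k L x) := by
    simpa [LieAlgebra.isNilpotent_iff_forall (R := k)] using not_isNilpotent k L
  obtain ⟨μ, hμ, hx⟩ := Module.End.exists_hasEigenvalue_ne_zero_of_not_isNilpotent hx
  obtain ⟨e, he⟩ := hx.exists_hasEigenvector
  refine ⟨μ⁻¹ • x, e, he.2, ?_⟩
  rw [smul_lie, ← ad_apply (R := k), he.apply_eq_smul, smul_smul, inv_mul_cancel₀ hμ, one_smul]

theorem exists_lie_notMem_span_singleton {e : L} (he : e ≠ 0) : ∃ x : L, ⁅x, e⁆ ∉ k ∙ e := by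
  by_contra! hI
  let I : LieIdeal k L :=
    { k ∙ e with
      lie_mem := fun {x m} hm ↦ by
        obtain ⟨a, rfl⟩ := Submodule.mem_span_singleton.mp hm
        simpa [lie_smul] using Submodule.smul_mem _ a (hI x) }
  rcases eq_bot_or_eq_top I with hbot | htop
  · have heI : e ∈ I := Submodule.mem_span_singleton_self e
    exact he (by rwa [hbot, LieSubmodule.mem_bot] at heI)
  · refine non_abelian k (L := L) ⟨fun x y ↦ ?_⟩
    have hmem : ∀ z : L, z ∈ k ∙ e := fun z ↦ (htop ▸ LieSubmodule.mem_top z :)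
    obtain ⟨a, rfl⟩ := Submodule.mem_span_singleton.mp (hmem x)
    obtain ⟨b, rfl⟩ := Submodule.mem_span_singleton.mp (hmem y)
    simp

theorem exists_lie_eq_and_lie_eq_add_smul [CharP k 2] (B : Module.Basis (Fin 3) k L)
    (hB : ⁅B 0, B 1⁆ = B 1) : ∃ (f : L) (γ : k), ⁅B 1, f⁆ = B 0 ∧ ⁅B 0, f⁆ = f + γ • B 1 := by
  obtain ⟨a, b, c, hhw⟩ := B.exists_eq_fin_three ⁅B 0, B 2⁆
  obtain ⟨p, q, r, hew⟩ := B.exists_eq_fin_three ⁅B 1, B 2⁆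
  have heh : ⁅B 1, B 0⁆ = B 1 := by rw [lie_comm_of_charTwo k, hB]
  have jacobi := leibniz_lie (B 0) (B 1) (B 2)
  simp only [hew, hhw, hB, lie_add, lie_smul, lie_self, heh] at jacobi
  obtain ⟨J0, J1, J2⟩ := B.eq_zero_of_fin_three (a := r * a - p - c * p) (b := r * b - a - c * q)
    (c := r * c - r - c * r) (by linear_combination (norm := module) jacobi)
  have hr : r = 0 := by linear_combination -J2
  have hp : p ≠ 0 := by
    rintro rfl
    have hwe : ⁅B 2, B 1⁆ = q • B 1 := by
      rw [lie_comm_of_charTwo k, hew, hr, zero_smul, zero_smul, zero_add, add_zero]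
    obtain ⟨x, hx⟩ := exists_lie_notMem_span_singleton (k := k) (B.ne_zero 1)
    obtain ⟨α, β, γ, rfl⟩ := B.exists_eq_fin_three x
    refine hx (Submodule.mem_span_singleton.mpr ⟨α + γ * q, ?_⟩)
    simp only [add_lie, smul_lie, hB, lie_self, hwe]
    module
  have hc : c = 1 := by
    have hpc : (1 + c) * p = 0 := by linear_combination -J0 + a * hr
    linear_combination (mul_eq_zero.mp hpc).resolve_right hp - CharTwo.two_eq_zero (R := k)
  have hq : q = a := by
    linear_combination -J1 + b * hr - q * hc - a * CharTwo.two_eq_zero (R := k)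
  refine ⟨p⁻¹ • (B 2 + a • B 0), p⁻¹ * b, ?_, ?_⟩
  · rw [lie_smul, lie_add, lie_smul, hew, heh, hr, hq]
    linear_combination (norm := module) (inv_mul_cancel₀ hp) • B 0 +
      (p⁻¹ * a * CharTwo.two_eq_zero (R := k)) • B 1
  · rw [lie_smul, lie_add, lie_smul, lie_self, hhw, hc]
    module

theorem exists_basis_isSTriple [IsAlgClosed k] [CharP k 2] (hL : Module.finrank k L = 3) :
    ∃ B : Module.Basis (Fin 3) k L, IsSTriple (B 0) (B 1) (B 2) := by
  have : FiniteDimensional k L := Module.finite_of_finrank_eq_succ hL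
  obtain ⟨h, e, he, hhe⟩ := exists_lie_eq_self (k := k) (L := L)
  obtain ⟨B, rfl, rfl⟩ := exists_basis_of_lie_eq_self hL he hhe
  obtain ⟨f, γ, hef, hhf⟩ := exists_lie_eq_and_lie_eq_add_smul B hhe
  obtain ⟨s, rfl⟩ := IsAlgClosed.exists_pow_nat_eq γ two_pos
  exact (IsSTriple.of_lie_eq_add_sq_smul hhe hef hhf).exists_basis he hL

end LieAlgebra.IsSimple

/-- Over an algebraically closed field of characteristic 2, every
3-dimensional simple Lie algebra admits a basis `{e, h, f}` (here `e = B 0`, `h = B 1`,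
`f = B 2`) with `⁅h,e⁆ = e`, `⁅h,f⁆ = f`, `⁅e,f⁆ = h`; consequently any two 3-dimensional
simple Lie algebras over `k` are isomorphic. -/
theorem stmt_5 (k : Type*) [Field k] [IsAlgClosed k] [CharP k 2]
    (L L' : Type*) [LieRing L] [LieAlgebra k L] [LieRing L'] [LieAlgebra k L']
    [LieAlgebra.IsSimple k L] [LieAlgebra.IsSimple k L']
    (hL : Module.finrank k L = 3) (hL' : Module.finrank k L' = 3) :
    (∃ B : Module.Basis (Fin 3) k L,
      ⁅B 1, B 0⁆ = B 0 ∧ ⁅B 1, B 2⁆ = B 2 ∧ ⁅B 0, B 2⁆ = B 1) ∧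
    Nonempty (L ≃ₗ⁅k⁆ L') := by
  obtain ⟨B, t⟩ := IsSimple.exists_basis_isSTriple (k := k) hL
  obtain ⟨B', t'⟩ := IsSimple.exists_basis_isSTriple (k := k) hL'
  exact ⟨⟨B, t.lie_h_e, t.lie_h_f, t.lie_e_f⟩, t.nonempty_lieEquiv t'⟩
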